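/- Let w be a permutation of {1,…,n} and 1 ≤ i ≤ n−1 with w(i) > w(i+1), and let w·s_i be the permutation obtained by exchanging the entries in positions i and i+1. Set p = ε_i(w) and q = ε_{i+1}(w). If p > q, then ε_i(w·s_i) = q, ε_{i+1}(w·s_i) = p, and ε_j(w·s_i) = ε_j(w) for all j ∉ {i, i+1}; in particular w and w·s_i have the same shape and raj(w) = raj(w·s_i). If p ≤ q, then α(w) ≻ α(w·s_i) in dominance order and raj(w) > raj(w·s_i). -/

import Mathlib

open scoped Classical

noncomputable section

namespace RajRegularity

variable {n : ℕ}

/-- Maximal length of an increasing subsequence of `w(i), …, w(n)` beginning with `w(i)`: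
the largest cardinality of a set `s` of positions that contains `i`, consists of positions
`≥ i`, and on which `w` is strictly increasing. -/
def lisFrom (w : Equiv.Perm (Fin n)) (i : Fin n) : ℕ :=
  (Finset.univ.filter fun s : Finset (Fin n) =>
      i ∈ s ∧ (∀ j ∈ s, i ≤ j) ∧ ∀ j ∈ s, ∀ k ∈ s, j < k → w j < w k).sup Finset.card

/-- `rajCode w i = (n − i + 1) −` (maximal length of an increasing subsequence of
`w(i), …, w(n)` beginning with `w(i)`); here positions are 0-based, so the number of
positions `≥ i` is `n - i`. -/
def rajCode (w : Equiv.Perm (Fin n)) (i : Fin n) : ℕ :=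
  (n - (i : ℕ)) - lisFrom w i

/-- The Rajchgot index `raj w = Σᵢ rajCode w i`. -/
def raj (w : Equiv.Perm (Fin n)) : ℕ := ∑ i, rajCode w i

/-- The number of inversions of `w`: pairs of positions `i < j` with `w i > w j`. -/
def invNum (w : Equiv.Perm (Fin n)) : ℕ :=
  (Finset.univ.filter fun p : Fin n × Fin n => p.1 < p.2 ∧ w p.2 < w p.1).card

/-- The `i`-th entry of the inv code: `ℓ_i(w) = #{ j : i < j, w j < w i }`. -/
def ellCode (w : Equiv.Perm (Fin n)) (i : Fin n) : ℕ :=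
  (Finset.univ.filter fun j : Fin n => i < j ∧ w j < w i).card

/-- The set of descent positions of `w` (0-based position `j` with `w j > w (j+1)`). -/
def descents (w : Equiv.Perm (Fin n)) : Finset (Fin n) :=
  Finset.univ.filter fun j : Fin n =>
    if h : (j : ℕ) + 1 < n then w ⟨(j : ℕ) + 1, h⟩ < w j else False

/-- The major index: the sum of the (1-based) descent positions of `w`. -/
def maj (w : Equiv.Perm (Fin n)) : ℕ := ∑ j ∈ descents w, ((j : ℕ) + 1)

/-- `mCode w i`: the number of descents of `w` at positions `≥ i`. -/
def mCode (w : Equiv.Perm (Fin n)) (i : Fin n) : ℕ :=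
  ((descents w).filter fun j => i ≤ j).card

/-- `w` is dominant iff it avoids the pattern 132. -/
def Dominant (w : Equiv.Perm (Fin n)) : Prop :=
  ¬ ∃ i j k : Fin n, i < j ∧ j < k ∧ w i < w k ∧ w k < w j

/-- `w` is fireworks iff there are no positions `i < j` with `w j < w (j+1) < w i`. -/
def Fireworks (w : Equiv.Perm (Fin n)) : Prop :=
  ¬ ∃ (i j : Fin n) (h : (j : ℕ) + 1 < n),
      i < j ∧ w j < w ⟨(j : ℕ) + 1, h⟩ ∧ w ⟨(j : ℕ) + 1, h⟩ < w i

/-- `w` is inverse fireworks iff `w⁻¹` is fireworks. -/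
def InvFireworks (w : Equiv.Perm (Fin n)) : Prop := Fireworks w⁻¹

/-- `w` is a valley permutation: for some `a`, it is strictly decreasing on positions `≤ a`
and strictly increasing on positions `≥ a`. -/
def Valley (w : Equiv.Perm (Fin n)) : Prop :=
  ∃ a : ℕ, (∀ i j : Fin n, i < j → (j : ℕ) ≤ a → w j < w i) ∧
    ∀ i j : Fin n, a ≤ (i : ℕ) → i < j → w i < w j

/-- `eps w i` is the (1-based) blob index `ε_i(w) = i + r_i(w)`. -/
def eps (w : Equiv.Perm (Fin n)) (i : Fin n) : ℕ := (i : ℕ) + 1 + rajCode w i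

/-- The shape of `w`: `α_k(w) = #{ i : ε_i(w) = k }` (here `k : Fin n` stands for the
1-based index `k + 1`). -/
def shape (w : Equiv.Perm (Fin n)) : Fin n → ℕ := fun k =>
  (Finset.univ.filter fun i : Fin n => eps w i = (k : ℕ) + 1).card

/-- Dominance order on shapes: `α ⪰ β` iff every tail sum of `α` is at least the
corresponding tail sum of `β`. -/
def Dominates (α β : Fin n → ℕ) : Prop :=
  ∀ m : Fin n,
    ∑ k ∈ Finset.univ.filter (fun k : Fin n => m ≤ k), β k ≤
      ∑ k ∈ Finset.univ.filter (fun k : Fin n => m ≤ k), α k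

/-- Right weak order: `u ≤_R w` iff `w = u * v` length-additively. -/
def leR (u w : Equiv.Perm (Fin n)) : Prop :=
  ∃ v : Equiv.Perm (Fin n), w = u * v ∧ invNum w = invNum u + invNum v

/-- Left weak order: `u ≤_L w` iff `w = v * u` length-additively. -/
def leL (u w : Equiv.Perm (Fin n)) : Prop :=
  ∃ v : Equiv.Perm (Fin n), w = v * u ∧ invNum w = invNum v + invNum u

/-- Two-sided weak order: the transitive closure of the union of left and right weak
orders (both are reflexive, so we may use the reflexive-transitive closure). -/
def leLR (u w : Equiv.Perm (Fin n)) : Prop :=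
  Relation.ReflTransGen (fun a b : Equiv.Perm (Fin n) => leL a b ∨ leR a b) u w

/-- The maximum of the block of the set partition `π(w)` containing the value `v`;
the block of `v` is `{ v' : ε_{w⁻¹ v'}(w) = ε_{w⁻¹ v}(w) }`. -/
def blockMax (w : Equiv.Perm (Fin n)) (v : Fin n) : ℕ :=
  ((Finset.univ.filter fun v' : Fin n => eps w (w⁻¹ v') = eps w (w⁻¹ v)).max'
      ⟨v, Finset.mem_filter.mpr ⟨Finset.mem_univ v, rfl⟩⟩).val

/-- The fireworks map `Φ`: the one-line word of `Φ w` lists the blocks of `π(w)` in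
increasing order of their maxima, each block written in decreasing order.  Equivalently,
`Φ w` sorts the values by the key (max of block, value reversed), lexicographically. -/
def Phi (w : Equiv.Perm (Fin n)) : Equiv.Perm (Fin n) :=
  Tuple.sort fun v : Fin n => n * blockMax w v + (n - 1 - (v : ℕ))

/-- The inverse fireworks map `Φ_inv w = Φ(w⁻¹)⁻¹`. -/
def PhiInv (w : Equiv.Perm (Fin n)) : Equiv.Perm (Fin n) := (Phi w⁻¹)⁻¹

/-- Partial sums of a sequence of block sizes. -/
def psum (a : ℕ → ℕ) (m : ℕ) : ℕ := ∑ j ∈ Finset.range m, a j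

/-- The index of the block (interval `[psum a m, psum a (m+1))`) containing the value `v`. -/
def blockIdx (n : ℕ) (a : ℕ → ℕ) (v : Fin n) : ℕ :=
  ((Finset.range n).filter fun m => psum a (m + 1) ≤ (v : ℕ)).card

/-- The layered permutation with block sizes `a 0, a 1, …`: it reverses each of the
consecutive intervals `[psum a m, psum a (m+1))` of `{0, …, n-1}`.  Equivalently, its
one-line word sorts the values by (block index, value reversed) lexicographically. -/
def layered (n : ℕ) (a : ℕ → ℕ) : Equiv.Perm (Fin n) :=
  Tuple.sort fun v : Fin n => n * blockIdx n a v + (n - 1 - (v : ℕ))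

/-- The layered permutation `e_α` associated to a shape `α : Fin n → ℕ`. -/
def eOf (α : Fin n → ℕ) : Equiv.Perm (Fin n) :=
  layered n fun m => if h : m < n then α ⟨m, h⟩ else 0

/-!
`lisFrom v m` is the length of the longest chain of ascents (`a < b`, `v a < v b`) starting at
`m`. Hence if a relabelling `τ` of positions carries every ascent of `v` to a pair along which
`lisFrom w` drops by at least one, then `lisFrom v ≤ lisFrom w ∘ τ`. For `u = w s_i` and
`τ = s_i` this applies because `w` has a descent at `i`, so `ε(u) ≤ ε(w) ∘ s_i`. If `p > q` it
applies with `u` and `w` exchanged as well: the only ascent of `u` that `s_i` reverses is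
`(i, i+1)`, and there `lisFrom w i < lisFrom w (i+1)`. So `ε(u) = ε(w) ∘ s_i`. If `p ≤ q`, the
ascent `(i, i+1)` of `u` forces `ε_i(u) < q`, so the inequality is strict at `i`.
The shape and `raj` only see the multiset of `ε`-values: tail sums of the shape count the
`ε`-values above a threshold, and `Σ ε = Σ (k+1) α_k = Σ (i+1) + raj`.
-/

section LongestIncreasing

variable {w : Equiv.Perm (Fin n)} {k l : Fin n}

def IncreasingFrom (w : Equiv.Perm (Fin n)) (k : Fin n) (s : Finset (Fin n)) : Prop :=
  k ∈ s ∧ (∀ j ∈ s, k ≤ j) ∧ ∀ j ∈ s, ∀ l ∈ s, j < l → w j < w l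

lemma card_le_lisFrom {s : Finset (Fin n)} (hs : IncreasingFrom w k s) :
    s.card ≤ lisFrom w k :=
  Finset.le_sup (Finset.mem_filter.mpr ⟨Finset.mem_univ _, hs⟩)

lemma increasingFrom_singleton (w : Equiv.Perm (Fin n)) (k : Fin n) :
    IncreasingFrom w k {k} := by
  refine ⟨Finset.mem_singleton_self k, by simp, ?_⟩
  intro a ha b hb hab
  rw [Finset.mem_singleton.mp ha, Finset.mem_singleton.mp hb] at hab
  exact absurd hab (lt_irrefl k)

lemma exists_increasingFrom_card_eq (w : Equiv.Perm (Fin n)) (k : Fin n) :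
    ∃ s, IncreasingFrom w k s ∧ s.card = lisFrom w k := by
  obtain ⟨s, hs, hcard⟩ : ∃ s ∈ _, lisFrom w k = Finset.card s := Finset.exists_mem_eq_sup _
    ⟨{k}, Finset.mem_filter.mpr ⟨Finset.mem_univ _, increasingFrom_singleton w k⟩⟩ _
  exact ⟨s, (Finset.mem_filter.mp hs).2, hcard.symm⟩

lemma one_le_lisFrom (w : Equiv.Perm (Fin n)) (k : Fin n) : 1 ≤ lisFrom w k := by
  simpa using card_le_lisFrom (increasingFrom_singleton w k)

lemma lisFrom_le_sub (w : Equiv.Perm (Fin n)) (k : Fin n) : lisFrom w k ≤ n - k := by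
  obtain ⟨s, hs, hcard⟩ := exists_increasingFrom_card_eq w k
  rw [← hcard, ← Fin.card_Ici]
  exact Finset.card_le_card fun m hm => Finset.mem_Ici.mpr (hs.2.1 m hm)

lemma lisFrom_add_one_le (hkl : k < l) (hw : w k < w l) : lisFrom w l + 1 ≤ lisFrom w k := by
  obtain ⟨s, ⟨hl, hge, hinc⟩, hcard⟩ := exists_increasingFrom_card_eq w l
  have hk : k ∉ s := fun h => absurd (hge k h) (not_le.mpr hkl)
  rw [← hcard, ← Finset.card_insert_of_notMem hk]
  refine card_le_lisFrom ⟨Finset.mem_insert_self k s, ?_, ?_⟩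
  · intro j hj
    rcases Finset.mem_insert.mp hj with rfl | hj
    exacts [le_rfl, hkl.le.trans (hge j hj)]
  · intro a ha b hb hab
    rcases Finset.mem_insert.mp ha with rfl | has <;> rcases Finset.mem_insert.mp hb with rfl | hbs
    · exact absurd hab (lt_irrefl _)
    · rcases (hge b hbs).eq_or_lt with rfl | hlb
      exacts [hw, hw.trans (hinc l hl b hbs hlb)]
    · exact absurd ((hkl.trans_le (hge a has)).trans hab) (lt_irrefl _)
    · exact hinc a has b hbs hab

lemma lisFrom_eq_one_or_exists (w : Equiv.Perm (Fin n)) (k : Fin n) :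
    lisFrom w k = 1 ∨ ∃ l, k < l ∧ w k < w l ∧ lisFrom w k ≤ lisFrom w l + 1 := by
  obtain ⟨s, ⟨hk, hge, hinc⟩, hcard⟩ := exists_increasingFrom_card_eq w k
  rw [← hcard, ← Finset.card_erase_add_one hk]
  rcases (s.erase k).eq_empty_or_nonempty with hempty | hne
  · left
    rw [hempty, Finset.card_empty]
  · right
    have hl := Finset.min'_mem _ hne
    obtain ⟨hlk, hls⟩ := Finset.mem_erase.mp hl
    have hkl : k < (s.erase k).min' hne := lt_of_le_of_ne (hge _ hls) (Ne.symm hlk)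
    refine ⟨_, hkl, hinc k hk _ hls hkl, Nat.add_le_add_right (card_le_lisFrom ⟨hl, ?_, ?_⟩) 1⟩
    · exact fun j hj => Finset.min'_le _ j hj
    · exact fun a ha b hb => hinc a (Finset.mem_of_mem_erase ha) b (Finset.mem_of_mem_erase hb)

lemma lisFrom_le_lisFrom_comp {v w : Equiv.Perm (Fin n)} (τ : Fin n → Fin n)
    (hτ : ∀ a b, a < b → v a < v b → lisFrom w (τ b) + 1 ≤ lisFrom w (τ a)) (m : Fin n) :
    lisFrom v m ≤ lisFrom w (τ m) := by
  induction m using WellFoundedGT.induction with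
  | _ m ih =>
    rcases lisFrom_eq_one_or_exists v m with h | ⟨l, hml, hv, hle⟩
    · exact h ▸ one_le_lisFrom w (τ m)
    · calc lisFrom v m ≤ lisFrom v l + 1 := hle
        _ ≤ lisFrom w (τ l) + 1 := Nat.add_le_add_right (ih l hml) 1
        _ ≤ lisFrom w (τ m) := hτ m l hml hv

lemma eps_eq_sub_lisFrom (w : Equiv.Perm (Fin n)) (k : Fin n) :
    eps w k = n + 1 - lisFrom w k := by
  have := lisFrom_le_sub w k
  have := k.isLt
  unfold eps rajCode
  omega

lemma eps_lt_eps_iff : eps w k < eps w l ↔ lisFrom w l < lisFrom w k := by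
  have := lisFrom_le_sub w k
  have := lisFrom_le_sub w l
  rw [eps_eq_sub_lisFrom, eps_eq_sub_lisFrom]
  omega

lemma eps_le (w : Equiv.Perm (Fin n)) (t : Fin n) : eps w t ≤ n := by
  have := one_le_lisFrom w t
  rw [eps_eq_sub_lisFrom]
  omega

end LongestIncreasing

lemma swap_lt_swap {i j a b : Fin n} (hij : (j : ℕ) = i + 1) (hab : a < b)
    (hne : ¬(a = i ∧ b = j)) : Equiv.swap i j a < Equiv.swap i j b := by
  rw [Equiv.swap_apply_def, Equiv.swap_apply_def]
  simp only [Fin.lt_def, Fin.ext_iff] at hab hne ⊢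
  split_ifs <;> omega

section AdjacentSwap

variable {w : Equiv.Perm (Fin n)} {i j : Fin n}

lemma lisFrom_swap_le_lisFrom_mul_swap (hij : (j : ℕ) = i + 1) (hdes : w j < w i) (m : Fin n) :
    lisFrom w (Equiv.swap i j m) ≤ lisFrom (w * Equiv.swap i j) m := by
  have hτ : ∀ a b, a < b → w a < w b →
      lisFrom (w * Equiv.swap i j) (Equiv.swap i j b) + 1 ≤
        lisFrom (w * Equiv.swap i j) (Equiv.swap i j a) := by
    intro a b hab hw
    have hne : ¬(a = i ∧ b = j) := by
      rintro ⟨rfl, rfl⟩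
      exact hw.asymm hdes
    exact lisFrom_add_one_le (swap_lt_swap hij hab hne) (by simpa [Equiv.Perm.mul_apply] using hw)
  simpa using lisFrom_le_lisFrom_comp _ hτ (Equiv.swap i j m)

lemma lisFrom_mul_swap_le_lisFrom_swap (hij : (j : ℕ) = i + 1)
    (hlt : lisFrom w i < lisFrom w j) (m : Fin n) :
    lisFrom (w * Equiv.swap i j) m ≤ lisFrom w (Equiv.swap i j m) := by
  refine lisFrom_le_lisFrom_comp _ (fun a b hab hu => ?_) m
  by_cases hne : a = i ∧ b = j
  · obtain ⟨rfl, rfl⟩ := hne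
    simpa using hlt
  · exact lisFrom_add_one_le (swap_lt_swap hij hab hne) (by simpa [Equiv.Perm.mul_apply] using hu)

lemma lisFrom_add_one_le_lisFrom_mul_swap (hij : (j : ℕ) = i + 1) (hdes : w j < w i) :
    lisFrom w i + 1 ≤ lisFrom (w * Equiv.swap i j) i := by
  calc lisFrom w i + 1 ≤ lisFrom (w * Equiv.swap i j) j + 1 := by
        simpa using lisFrom_swap_le_lisFrom_mul_swap hij hdes j
    _ ≤ lisFrom (w * Equiv.swap i j) i :=
        lisFrom_add_one_le (Fin.lt_def.mpr (by omega)) (by simpa [Equiv.Perm.mul_apply] using hdes)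

lemma eps_mul_swap_le (hij : (j : ℕ) = i + 1) (hdes : w j < w i) (m : Fin n) :
    eps (w * Equiv.swap i j) m ≤ eps w (Equiv.swap i j m) := by
  rw [eps_eq_sub_lisFrom, eps_eq_sub_lisFrom]
  have := lisFrom_swap_le_lisFrom_mul_swap hij hdes m
  omega

lemma eps_mul_swap_eq (hij : (j : ℕ) = i + 1) (hdes : w j < w i) (hlt : eps w j < eps w i)
    (m : Fin n) : eps (w * Equiv.swap i j) m = eps w (Equiv.swap i j m) := by
  rw [eps_eq_sub_lisFrom, eps_eq_sub_lisFrom, le_antisymm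
    (lisFrom_mul_swap_le_lisFrom_swap hij (eps_lt_eps_iff.mp hlt) m)
    (lisFrom_swap_le_lisFrom_mul_swap hij hdes m)]

lemma eps_mul_swap_lt (hij : (j : ℕ) = i + 1) (hdes : w j < w i) (hle : eps w i ≤ eps w j) :
    eps (w * Equiv.swap i j) i < eps w (Equiv.swap i j i) := by
  have hL : lisFrom w j ≤ lisFrom w i := not_lt.mp (mt eps_lt_eps_iff.mpr (not_lt.mpr hle))
  have := lisFrom_add_one_le_lisFrom_mul_swap hij hdes
  have := lisFrom_le_sub (w * Equiv.swap i j) i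
  rw [Equiv.swap_apply_left, eps_eq_sub_lisFrom, eps_eq_sub_lisFrom]
  omega

end AdjacentSwap

lemma card_filter_perm_comp {α : Type*} [Fintype α] (σ : Equiv.Perm α) (p : α → Prop)
    [DecidablePred p] :
    (Finset.univ.filter fun a => p (σ a)).card = (Finset.univ.filter p).card :=
  Finset.card_equiv σ fun a => by simp

section Shape

variable {u w : Equiv.Perm (Fin n)}

def epsIdx (w : Equiv.Perm (Fin n)) (t : Fin n) : Fin n :=
  ⟨eps w t - 1, by have := eps_le w t; have := t.isLt; omega⟩

lemma eps_eq_epsIdx_add_one (w : Equiv.Perm (Fin n)) (t : Fin n) :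
    eps w t = (epsIdx w t : ℕ) + 1 := by
  simp only [epsIdx, eps]
  omega

lemma shape_eq_card_epsIdx (w : Equiv.Perm (Fin n)) (k : Fin n) :
    shape w k = (Finset.univ.filter fun t => epsIdx w t = k).card := by
  simp only [shape, eps_eq_epsIdx_add_one, Nat.add_right_cancel_iff, Fin.val_inj]

lemma sum_shape_tail (w : Equiv.Perm (Fin n)) (m : Fin n) :
    ∑ k ∈ Finset.univ.filter (fun k : Fin n => m ≤ k), shape w k =
      (Finset.univ.filter fun t : Fin n => (m : ℕ) + 1 ≤ eps w t).card := by
  simp only [shape_eq_card_epsIdx, eps_eq_epsIdx_add_one, Nat.add_le_add_iff_right, Fin.val_fin_le]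
  rw [Finset.card_eq_sum_card_fiberwise (f := epsIdx w)
    (t := Finset.univ.filter (fun k : Fin n => m ≤ k)) (fun t ht => by simpa using ht)]
  refine Finset.sum_congr rfl fun k hk => congrArg Finset.card ?_
  ext t
  simp only [Finset.mem_filter, Finset.mem_univ, true_and] at hk ⊢
  exact ⟨fun h => ⟨h ▸ hk, h⟩, And.right⟩

lemma sum_mul_shape (w : Equiv.Perm (Fin n)) :
    ∑ k : Fin n, ((k : ℕ) + 1) * shape w k = ∑ t, eps w t := by
  rw [← Finset.sum_fiberwise_of_maps_to (g := epsIdx w) (t := Finset.univ)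
    (fun t _ => Finset.mem_univ _) (eps w)]
  refine Finset.sum_congr rfl fun k _ => ?_
  rw [shape_eq_card_epsIdx, Finset.sum_congr rfl (g := fun _ => (k : ℕ) + 1), Finset.sum_const,
    smul_eq_mul, mul_comm]
  intro t ht
  rw [eps_eq_epsIdx_add_one, (Finset.mem_filter.mp ht).2]

lemma sum_eps (w : Equiv.Perm (Fin n)) :
    ∑ t, eps w t = ∑ t : Fin n, ((t : ℕ) + 1) + raj w := by
  simp only [eps, raj, Finset.sum_add_distrib]

lemma shape_eq_of_eps_eq_comp (σ : Equiv.Perm (Fin n)) (h : ∀ t, eps u t = eps w (σ t)) :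
    shape u = shape w := by
  funext k
  simp only [shape, h]
  exact card_filter_perm_comp σ fun t => eps w t = (k : ℕ) + 1

lemma dominates_shape_of_eps_le_comp (σ : Equiv.Perm (Fin n)) (h : ∀ t, eps u t ≤ eps w (σ t)) :
    Dominates (shape w) (shape u) := by
  intro m
  rw [sum_shape_tail, sum_shape_tail]
  refine (Finset.card_le_card fun t ht => ?_).trans_eq
    (card_filter_perm_comp σ fun t => (m : ℕ) + 1 ≤ eps w t)
  simp only [Finset.mem_filter, Finset.mem_univ, true_and] at ht ⊢
  exact ht.trans (h t)

lemma sum_eps_lt_of_eps_le_comp (σ : Equiv.Perm (Fin n)) (h : ∀ t, eps u t ≤ eps w (σ t))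
    (t₀ : Fin n) (h₀ : eps u t₀ < eps w (σ t₀)) : ∑ t, eps u t < ∑ t, eps w t :=
  (Finset.sum_lt_sum (fun t _ => h t) ⟨t₀, Finset.mem_univ _, h₀⟩).trans_eq (Equiv.sum_comp σ _)

lemma raj_eq_of_sum_eps_eq (h : ∑ t, eps u t = ∑ t, eps w t) : raj u = raj w := by
  have := sum_eps u
  have := sum_eps w
  omega

lemma raj_lt_of_sum_eps_lt (h : ∑ t, eps u t < ∑ t, eps w t) : raj u < raj w := by
  have := sum_eps u
  have := sum_eps w
  omega

lemma shape_ne_of_sum_eps_lt (h : ∑ t, eps u t < ∑ t, eps w t) : shape w ≠ shape u := by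
  intro hs
  rw [← sum_mul_shape, ← sum_mul_shape, hs] at h
  exact lt_irrefl _ h

end Shape

/-- Let `i, j` be consecutive positions (`j = i + 1`) with `w i > w j`,
and let `w * swap i j` be `w` with the entries in positions `i` and `j` exchanged.
Writing `p = ε_i(w)` and `q = ε_{i+1}(w)`: if `p > q` then the two `ε`-values at
positions `i, j` are exchanged, all other `ε`-values are unchanged, and `w` and
`w·s_i` have the same shape and the same Rajchgot index; if `p ≤ q` then
`α(w) ≻ α(w·s_i)` in dominance order and `raj(w) > raj(w·s_i)`. -/
theorem eps_of_right_cover (n : ℕ) (w : Equiv.Perm (Fin n)) (i j : Fin n)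
    (hij : (j : ℕ) = (i : ℕ) + 1) (hdes : w j < w i) :
    (eps w j < eps w i →
      eps (w * Equiv.swap i j) i = eps w j ∧
      eps (w * Equiv.swap i j) j = eps w i ∧
      (∀ k : Fin n, k ≠ i → k ≠ j → eps (w * Equiv.swap i j) k = eps w k) ∧
      shape (w * Equiv.swap i j) = shape w ∧
      raj (w * Equiv.swap i j) = raj w) ∧
    (eps w i ≤ eps w j →
      Dominates (shape w) (shape (w * Equiv.swap i j)) ∧
      shape w ≠ shape (w * Equiv.swap i j) ∧
      raj (w * Equiv.swap i j) < raj w) := by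
  refine ⟨fun hlt => ?_, fun hle => ?_⟩
  · have heq := eps_mul_swap_eq hij hdes hlt
    refine ⟨by simpa using heq i, by simpa using heq j,
      fun k hki hkj => by rw [heq, Equiv.swap_apply_of_ne_of_ne hki hkj],
      shape_eq_of_eps_eq_comp _ heq, raj_eq_of_sum_eps_eq ?_⟩
    simp only [heq]
    exact Equiv.sum_comp _ (eps w)
  · have hsum := sum_eps_lt_of_eps_le_comp _ (eps_mul_swap_le hij hdes) i
      (eps_mul_swap_lt hij hdes hle)
    exact ⟨dominates_shape_of_eps_le_comp _ (eps_mul_swap_le hij hdes),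
      shape_ne_of_sum_eps_lt hsum, raj_lt_of_sum_eps_lt hsum⟩

end RajRegularity
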